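/- arXiv:1602.07021 — 2 statements merged into one kernel-verified Lean document; each statement's English description precedes it below -/
import Mathlib

section
/- Let GL(2,ℂ) act on homogeneous polynomials of degree w by (A·P)(X,Y) = P(A^{-1}(X,Y)^T). Then for all homogeneous polynomials P₁, P₂ of degree w and all A ∈ GL(2,ℂ), one has [A·P₁ | A·P₂] = det(A)^{-w} [P₁ | P₂]. -/
open Finset Matrix

/-- The pairing `[P₁ | P₂] = ∑ (-1)^l (w choose l)⁻¹ a_l b_{w-l}` on degree-`w`
homogeneous polynomials, given by their coefficient vectors. -/
noncomputable def polyPair (w : ℕ) (a b : ℕ → ℂ) : ℂ :=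
  ∑ l ∈ range (w + 1), (-1) ^ l * ((w.choose l : ℂ))⁻¹ * a l * b (w - l)

/-- The homogeneous polynomial of degree `w` with coefficient vector `a`,
evaluated at `(x, y)`. -/
noncomputable def polyEval (w : ℕ) (a : ℕ → ℂ) (x y : ℂ) : ℂ :=
  ∑ l ∈ range (w + 1), a l * x ^ l * y ^ (w - l)

lemma polyEval_ext {w : ℕ} {a b : ℕ → ℂ}
    (h : ∀ x y : ℂ, polyEval w a x y = polyEval w b x y) :
    ∀ l ∈ range (w + 1), a l = b l := by
  intro l hl
  have hp : (∑ k ∈ range (w+1), Polynomial.C (a k) * Polynomial.X ^ k) =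
      (∑ k ∈ range (w+1), Polynomial.C (b k) * Polynomial.X ^ k) := by
    apply Polynomial.funext
    intro x
    have := h x 1
    simpa [polyEval, Polynomial.eval_finset_sum] using this
  have := congrArg (fun p => Polynomial.coeff p l) hp
  simpa [Polynomial.finset_sum_coeff, Polynomial.coeff_C_mul, Polynomial.coeff_X_pow,
    Finset.sum_ite_eq' (range (w+1)) l, hl] using this

lemma polyPair_congr {w : ℕ} {a b a' b' : ℕ → ℂ}
    (ha : ∀ l ∈ range (w + 1), a l = a' l) (hb : ∀ l ∈ range (w + 1), b l = b' l) :
    polyPair w a b = polyPair w a' b' := by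
  unfold polyPair
  apply Finset.sum_congr rfl
  intro l hl
  rw [ha l hl, hb (w - l) (by simp at hl ⊢)]

lemma alt_sum_complex {d : ℕ} (hd : d ≠ 0) :
    ∑ i ∈ range (d + 1), (-1 : ℂ) ^ i * (d.choose i : ℂ) = 0 := by
  have h := Int.alternating_sum_range_choose_of_ne hd
  have h2 : ((∑ i ∈ range (d + 1), (-1 : ℤ) ^ i * (d.choose i : ℤ) : ℤ) : ℂ) = 0 := by
    rw [h]; simp
  push_cast at h2
  exact h2

lemma choose_ratio {w m n l : ℕ} (hm : m ≤ w) (hn : n ≤ w) (h1 : w - n ≤ l) (h2 : l ≤ m) :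
    ((w.choose l : ℂ))⁻¹ * (m.choose l : ℂ) * (n.choose (w - l) : ℂ) =
    (m.factorial : ℂ) * (n.factorial : ℂ) /
      ((w.factorial : ℂ) * ((m + n - w).factorial : ℂ)) *
      ((m + n - w).choose (l - (w - n)) : ℂ) := by
  have hlw : l ≤ w := le_trans h2 hm
  have hwln : w - l ≤ n := by omega
  have hj : l - (w - n) ≤ m + n - w := by omega
  rw [Nat.cast_choose ℂ hlw, Nat.cast_choose ℂ h2, Nat.cast_choose ℂ hwln,
    Nat.cast_choose ℂ hj]
  have e1 : n - (w - l) = l - (w - n) := by omega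
  have e2 : m + n - w - (l - (w - n)) = m - l := by omega
  rw [e1, e2]
  have f : ∀ k : ℕ, (k.factorial : ℂ) ≠ 0 := fun k => by
    exact_mod_cast k.factorial_ne_zero
  field_simp [f]

lemma key_sum (w m n : ℕ) (hm : m ≤ w) (hn : n ≤ w) (c : ℂ) :
    ∑ l ∈ range (w + 1), (-1) ^ l * ((w.choose l : ℂ))⁻¹ *
      ((m.choose l : ℂ) * c ^ (m - l)) * ((n.choose (w - l) : ℂ) * c ^ (n - (w - l))) =
    if n = w - m then (-1) ^ m * ((w.choose m : ℂ))⁻¹ else 0 := by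
  rcases lt_trichotomy (m + n) w with hlt | heq | hgt
  · rw [if_neg (by omega)]
    apply Finset.sum_eq_zero
    intro l hl
    rcases le_or_gt l m with h | h
    · have : n.choose (w - l) = 0 := Nat.choose_eq_zero_of_lt (by omega)
      simp [this]
    · have : m.choose l = 0 := Nat.choose_eq_zero_of_lt h
      simp [this]
  · rw [if_pos (by omega)]
    rw [Finset.sum_eq_single m]
    · have e1 : m - m = 0 := by omega
      have e2 : n - (w - m) = 0 := by omega
      have e3 : w - m = n := by omega
      simp [e1, e2, e3]
    · intro l hl hne
      rcases lt_or_lt_iff_ne.mpr hne with h | h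
      · have : n.choose (w - l) = 0 := Nat.choose_eq_zero_of_lt (by omega)
        simp [this]
      · have : m.choose l = 0 := Nat.choose_eq_zero_of_lt h
        simp [this]
    · intro h
      exact absurd (Finset.mem_range.mpr (by omega)) h
  · rw [if_neg (by omega)]
    set d := m + n - w with hd
    have hd0 : d ≠ 0 := by omega
    have hsub : Finset.Icc (w - n) m ⊆ range (w + 1) := by
      intro l hl
      simp only [Finset.mem_Icc] at hl
      exact Finset.mem_range.mpr (by omega)
    rw [← Finset.sum_subset hsub]
    · rw [Finset.sum_congr rfl (g := fun l =>
        ((-1 : ℂ) ^ (w - n) * ((m.factorial : ℂ) * (n.factorial : ℂ) /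
          ((w.factorial : ℂ) * ((d).factorial : ℂ))) * c ^ d) *
          ((-1 : ℂ) ^ (l - (w - n)) * ((d).choose (l - (w - n)) : ℂ)))]
      · rw [← Finset.mul_sum, ← Finset.Ico_add_one_right_eq_Icc, Finset.sum_Ico_eq_sum_range]
        have hm1 : m + 1 - (w - n) = d + 1 := by omega
        rw [hm1]
        have heq2 : ∑ i ∈ range (d + 1),
            (-1 : ℂ) ^ (w - n + i - (w - n)) * ((d).choose (w - n + i - (w - n)) : ℂ) =
            ∑ i ∈ range (d + 1), (-1 : ℂ) ^ i * ((d).choose i : ℂ) := by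
          apply Finset.sum_congr rfl
          intro i _
          have : w - n + i - (w - n) = i := by omega
          rw [this]
        rw [heq2, alt_sum_complex hd0, mul_zero]
      · intro l hl
        simp only [Finset.mem_Icc] at hl
        obtain ⟨h1, h2⟩ := hl
        have hc : c ^ (m - l) * c ^ (n - (w - l)) = c ^ d := by
          rw [← pow_add]; congr 1; omega
        have hch := choose_ratio hm hn h1 h2
        have hsign : ((-1 : ℂ)) ^ l = (-1) ^ (w - n) * (-1) ^ (l - (w - n)) := by
          rw [← pow_add]; congr 1; omega
        calc (-1 : ℂ) ^ l * ((w.choose l : ℂ))⁻¹ *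
              ((m.choose l : ℂ) * c ^ (m - l)) * ((n.choose (w - l) : ℂ) * c ^ (n - (w - l)))
            = (-1 : ℂ) ^ l * (((w.choose l : ℂ))⁻¹ * (m.choose l : ℂ) * (n.choose (w - l) : ℂ)) *
              (c ^ (m - l) * c ^ (n - (w - l))) := by ring
          _ = _ := by rw [hch, hc, hsign]; ring
    · intro l hl hnotin
      simp only [Finset.mem_Icc, not_and_or, not_le] at hnotin
      rcases hnotin with h | h
      · have : n.choose (w - l) = 0 := Nat.choose_eq_zero_of_lt (by omega)
        simp [this]
      · have : m.choose l = 0 := Nat.choose_eq_zero_of_lt h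
        simp [this]

noncomputable def sha (w : ℕ) (c : ℂ) (a : ℕ → ℂ) (l : ℕ) : ℂ :=
  ∑ m ∈ range (w + 1), (m.choose l : ℂ) * c ^ (m - l) * a m

lemma sha_eval (w : ℕ) (c : ℂ) (a : ℕ → ℂ) (x y : ℂ) :
    polyEval w (sha w c a) x y = polyEval w a (x + c * y) y := by
  unfold polyEval sha
  have rhs : ∀ m ∈ range (w + 1), a m * (x + c * y) ^ m * y ^ (w - m) =
      ∑ l ∈ range (w + 1), (m.choose l : ℂ) * c ^ (m - l) * a m * x ^ l * y ^ (w - l) := by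
    intro m hm
    simp only [Finset.mem_range] at hm
    rw [add_pow]
    simp only [Finset.sum_mul, Finset.mul_sum]
    rw [← Finset.sum_subset (Finset.range_subset_range.mpr (by omega : m + 1 ≤ w + 1))]
    · apply Finset.sum_congr rfl
      intro l hl
      simp only [Finset.mem_range] at hl
      have hy : y ^ (m - l) * y ^ (w - m) = y ^ (w - l) := by
        rw [← pow_add]; congr 1; omega
      rw [mul_pow]
      calc a m * (x ^ l * (c ^ (m - l) * y ^ (m - l)) * (m.choose l : ℂ)) * y ^ (w - m)
          = (m.choose l : ℂ) * c ^ (m - l) * a m * x ^ l * (y ^ (m - l) * y ^ (w - m)) := by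
            ring
        _ = _ := by rw [hy]
    · intro l hl hnot
      simp only [Finset.mem_range] at hl hnot
      have : m.choose l = 0 := Nat.choose_eq_zero_of_lt (by omega)
      simp [this]
  rw [Finset.sum_congr rfl rhs, Finset.sum_comm]
  apply Finset.sum_congr rfl
  intro l _
  simp only [Finset.sum_mul]

lemma sha_pair (w : ℕ) (c : ℂ) (a b : ℕ → ℂ) :
    polyPair w (sha w c a) (sha w c b) = polyPair w a b := by
  unfold polyPair sha
  simp only [Finset.mul_sum, Finset.sum_mul]
  rw [Finset.sum_comm]
  calc ∑ n ∈ range (w + 1), ∑ l ∈ range (w + 1), ∑ m ∈ range (w + 1),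
        (-1) ^ l * ((w.choose l : ℂ))⁻¹ * ((m.choose l : ℂ) * c ^ (m - l) * a m) *
          ((n.choose (w - l) : ℂ) * c ^ (n - (w - l)) * b n)
      = ∑ n ∈ range (w + 1), ∑ m ∈ range (w + 1), ∑ l ∈ range (w + 1),
        (-1) ^ l * ((w.choose l : ℂ))⁻¹ * ((m.choose l : ℂ) * c ^ (m - l) * a m) *
          ((n.choose (w - l) : ℂ) * c ^ (n - (w - l)) * b n) :=
        Finset.sum_congr rfl fun n _ => Finset.sum_comm
    _ = ∑ n ∈ range (w + 1), ∑ m ∈ range (w + 1),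
          a m * b n * (if n = w - m then (-1) ^ m * ((w.choose m : ℂ))⁻¹ else 0) := by
        apply Finset.sum_congr rfl
        intro n hn
        apply Finset.sum_congr rfl
        intro m hm
        simp only [Finset.mem_range] at hn hm
        rw [← key_sum w m n (by omega) (by omega) c, Finset.mul_sum]
        apply Finset.sum_congr rfl
        intro l _
        ring
    _ = ∑ m ∈ range (w + 1), ∑ n ∈ range (w + 1),
          a m * b n * (if n = w - m then (-1) ^ m * ((w.choose m : ℂ))⁻¹ else 0) :=
        Finset.sum_comm
    _ = ∑ m ∈ range (w + 1), (-1) ^ m * ((w.choose m : ℂ))⁻¹ * a m * b (w - m) := by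
        apply Finset.sum_congr rfl
        intro m hm
        simp only [Finset.mem_range] at hm
        rw [Finset.sum_eq_single (w - m)]
        · rw [if_pos rfl]; ring
        · intro n _ hne
          rw [if_neg hne, mul_zero]
        · intro h
          exact absurd (Finset.mem_range.mpr (by omega)) h

/-- The invariance property for a single matrix. -/
def GoodMat (w : ℕ) (B : Matrix (Fin 2) (Fin 2) ℂ) : Prop :=
  (∀ a : ℕ → ℂ, ∃ a' : ℕ → ℂ, ∀ x y : ℂ,
      polyEval w a' x y = polyEval w a (B.mulVec ![x, y] 0) (B.mulVec ![x, y] 1)) ∧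
  (∀ a b a' b' : ℕ → ℂ,
      (∀ x y : ℂ, polyEval w a' x y = polyEval w a (B.mulVec ![x, y] 0) (B.mulVec ![x, y] 1)) →
      (∀ x y : ℂ, polyEval w b' x y = polyEval w b (B.mulVec ![x, y] 0) (B.mulVec ![x, y] 1)) →
      polyPair w a' b' = B.det ^ w * polyPair w a b)

lemma goodMat_of_transform {w : ℕ} {B : Matrix (Fin 2) (Fin 2) ℂ}
    (Φ : (ℕ → ℂ) → (ℕ → ℂ))
    (heval : ∀ (a : ℕ → ℂ) (x y : ℂ),
      polyEval w (Φ a) x y = polyEval w a (B.mulVec ![x, y] 0) (B.mulVec ![x, y] 1))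
    (hpair : ∀ a b : ℕ → ℂ, polyPair w (Φ a) (Φ b) = B.det ^ w * polyPair w a b) :
    GoodMat w B := by
  constructor
  · intro a
    exact ⟨Φ a, heval a⟩
  · intro a b a' b' ha hb
    have ha' : ∀ l ∈ range (w + 1), a' l = Φ a l :=
      polyEval_ext (fun x y => by rw [ha x y, heval a x y])
    have hb' : ∀ l ∈ range (w + 1), b' l = Φ b l :=
      polyEval_ext (fun x y => by rw [hb x y, heval b x y])
    rw [polyPair_congr ha' hb', hpair]

lemma vec_eta (v : Fin 2 → ℂ) : ![v 0, v 1] = v := by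
  funext i
  fin_cases i <;> simp

lemma goodMat_mul {w : ℕ} {B₁ B₂ : Matrix (Fin 2) (Fin 2) ℂ}
    (h₁ : GoodMat w B₁) (h₂ : GoodMat w B₂) : GoodMat w (B₁ * B₂) := by
  have hmv : ∀ (x y : ℂ) (i : Fin 2), (B₁ * B₂).mulVec ![x, y] i =
      B₁.mulVec ![B₂.mulVec ![x, y] 0, B₂.mulVec ![x, y] 1] i := by
    intro x y i
    rw [vec_eta (B₂.mulVec ![x, y]), ← Matrix.mulVec_mulVec]
  constructor
  · intro a
    obtain ⟨a₁, ha₁⟩ := h₁.1 a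
    obtain ⟨a₂, ha₂⟩ := h₂.1 a₁
    refine ⟨a₂, fun x y => ?_⟩
    rw [ha₂, ha₁, hmv x y 0, hmv x y 1]
  · intro a b a' b' ha hb
    obtain ⟨a₁, ha₁⟩ := h₁.1 a
    obtain ⟨b₁, hb₁⟩ := h₁.1 b
    have ha' : ∀ x y : ℂ, polyEval w a' x y =
        polyEval w a₁ (B₂.mulVec ![x, y] 0) (B₂.mulVec ![x, y] 1) := by
      intro x y
      rw [ha, ha₁, hmv x y 0, hmv x y 1]
    have hb' : ∀ x y : ℂ, polyEval w b' x y =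
        polyEval w b₁ (B₂.mulVec ![x, y] 0) (B₂.mulVec ![x, y] 1) := by
      intro x y
      rw [hb, hb₁, hmv x y 0, hmv x y 1]
    rw [h₂.2 a₁ b₁ a' b' ha' hb', h₁.2 a b a₁ b₁ ha₁ hb₁, Matrix.det_mul, mul_pow]
    ring

lemma goodMat_diagonal {w : ℕ} (d : Fin 2 → ℂ) : GoodMat w (diagonal d) := by
  apply goodMat_of_transform (fun a l => a l * d 0 ^ l * d 1 ^ (w - l))
  · intro a x y
    unfold polyEval
    simp only [Matrix.mulVec_diagonal]
    apply Finset.sum_congr rfl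
    intro l _
    simp only [Matrix.cons_val_zero, Matrix.cons_val_one, Matrix.head_cons]
    rw [mul_pow, mul_pow]
    ring
  · intro a b
    unfold polyPair
    rw [Matrix.det_diagonal, Fin.prod_univ_two, Finset.mul_sum]
    apply Finset.sum_congr rfl
    intro l hl
    simp only [Finset.mem_range] at hl
    dsimp only
    have h1 : w - (w - l) = l := by omega
    have h2 : d 0 ^ l * d 0 ^ (w - l) = d 0 ^ w := by rw [← pow_add]; congr 1; omega
    have h3 : d 1 ^ (w - l) * d 1 ^ l = d 1 ^ w := by rw [← pow_add]; congr 1; omega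
    rw [h1]
    calc (-1) ^ l * ((w.choose l : ℂ))⁻¹ * (a l * d 0 ^ l * d 1 ^ (w - l)) *
          (b (w - l) * d 0 ^ (w - l) * d 1 ^ l)
        = (-1) ^ l * ((w.choose l : ℂ))⁻¹ * a l * b (w - l) *
          ((d 0 ^ l * d 0 ^ (w - l)) * (d 1 ^ (w - l) * d 1 ^ l)) := by ring
      _ = _ := by rw [h2, h3, mul_pow]; ring

lemma goodMat_swap {w : ℕ} : GoodMat w !![(0 : ℂ), 1; 1, 0] := by
  have hmv0 : ∀ x y : ℂ, (!![(0 : ℂ), 1; 1, 0]).mulVec ![x, y] 0 = y := by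
    intro x y
    simp [Matrix.mulVec, dotProduct, Fin.sum_univ_two]
  have hmv1 : ∀ x y : ℂ, (!![(0 : ℂ), 1; 1, 0]).mulVec ![x, y] 1 = x := by
    intro x y
    simp [Matrix.mulVec, dotProduct, Fin.sum_univ_two]
  apply goodMat_of_transform (fun a l => a (w - l))
  · intro a x y
    rw [hmv0, hmv1]
    unfold polyEval
    rw [← Finset.sum_range_reflect]
    apply Finset.sum_congr rfl
    intro l hl
    simp only [Finset.mem_range] at hl
    dsimp only
    have e1 : w + 1 - 1 - l = w - l := by omega
    have e2 : w - (w - l) = l := by omega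
    rw [e1, e2]
    ring
  · intro a b
    unfold polyPair
    have hdet : (!![(0 : ℂ), 1; 1, 0]).det = -1 := by
      rw [Matrix.det_fin_two_of]; ring
    rw [hdet]
    rw [← Finset.sum_range_reflect]
    rw [Finset.mul_sum]
    apply Finset.sum_congr rfl
    intro l hl
    simp only [Finset.mem_range] at hl
    dsimp only
    have e1 : w + 1 - 1 - l = w - l := by omega
    have e2 : w - (w - l) = l := by omega
    have e3 : (w.choose (w - l) : ℂ) = (w.choose l : ℂ) := by
      rw [Nat.choose_symm (by omega)]
    have e4 : (-1 : ℂ) ^ (w - l) = (-1) ^ w * (-1) ^ l := by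
      have : (-1 : ℂ) ^ (w - l) * (-1) ^ l * (-1) ^ l = (-1) ^ w * (-1) ^ l := by
        rw [mul_assoc, ← pow_add, ← pow_add]
        have h5 : w - l + (l + l) = w + l := by omega
        rw [h5, pow_add]
      calc (-1 : ℂ) ^ (w - l) = (-1 : ℂ) ^ (w - l) * ((-1) ^ l * (-1) ^ l) := by
            rw [← pow_add]
            have : l + l = 2 * l := by omega
            rw [this, pow_mul]
            norm_num
        _ = (-1) ^ w * (-1) ^ l := by rw [← mul_assoc, this]
    rw [e1, e2, e3, e4]
    ring

lemma transvection_01 (c : ℂ) :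
    Matrix.transvection (0 : Fin 2) 1 c = !![(1 : ℂ), c; 0, 1] := by
  ext i j
  fin_cases i <;> fin_cases j <;>
    simp [Matrix.transvection, Matrix.single, Matrix.one_apply]

lemma goodMat_shear {w : ℕ} (c : ℂ) : GoodMat w !![(1 : ℂ), c; 0, 1] := by
  have hmv0 : ∀ x y : ℂ, (!![(1 : ℂ), c; 0, 1]).mulVec ![x, y] 0 = x + c * y := by
    intro x y
    simp [Matrix.mulVec, dotProduct, Fin.sum_univ_two]
  have hmv1 : ∀ x y : ℂ, (!![(1 : ℂ), c; 0, 1]).mulVec ![x, y] 1 = y := by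
    intro x y
    simp [Matrix.mulVec, dotProduct, Fin.sum_univ_two]
  apply goodMat_of_transform (sha w c)
  · intro a x y
    rw [hmv0, hmv1, sha_eval]
  · intro a b
    have hdet : (!![(1 : ℂ), c; 0, 1]).det = 1 := by
      rw [Matrix.det_fin_two_of]; ring
    rw [hdet, one_pow, one_mul, sha_pair]

lemma swap_conj (c : ℂ) :
    !![(0 : ℂ), 1; 1, 0] * (!![(1 : ℂ), c; 0, 1] * !![(0 : ℂ), 1; 1, 0]) =
      !![(1 : ℂ), 0; c, 1] := by
  ext i j
  fin_cases i <;> fin_cases j <;>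
    simp [Matrix.mul_apply, Fin.sum_univ_two]

lemma transvection_10 (c : ℂ) :
    Matrix.transvection (1 : Fin 2) 0 c = !![(1 : ℂ), 0; c, 1] := by
  ext i j
  fin_cases i <;> fin_cases j <;>
    simp [Matrix.transvection, Matrix.single, Matrix.one_apply]

lemma goodMat_transvection' {w : ℕ} (i j : Fin 2) (hij : i ≠ j) (c : ℂ) :
    GoodMat w (Matrix.transvection i j c) := by
  fin_cases i <;> fin_cases j
  · exact absurd rfl hij
  · show GoodMat w (Matrix.transvection 0 1 c)
    rw [transvection_01]
    exact goodMat_shear c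
  · show GoodMat w (Matrix.transvection 1 0 c)
    rw [transvection_10, ← swap_conj]
    exact goodMat_mul goodMat_swap (goodMat_mul (goodMat_shear c) goodMat_swap)
  · exact absurd rfl hij

lemma goodMat_transvection {w : ℕ} (t : Matrix.TransvectionStruct (Fin 2) ℂ) :
    GoodMat w t.toMatrix := by
  obtain ⟨i, j, hij, c⟩ := t
  simp only [Matrix.TransvectionStruct.toMatrix_mk]
  exact goodMat_transvection' i j hij c

lemma goodMat_all {w : ℕ} (B : Matrix (Fin 2) (Fin 2) ℂ) : GoodMat w B := by
  apply Matrix.diagonal_transvection_induction (GoodMat w) B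
  · intro D _
    exact goodMat_diagonal D
  · intro t
    exact goodMat_transvection t
  · intro A B hA hB
    exact goodMat_mul hA hB

/-- `[A·P₁ | A·P₂] = det(A)^{-w} [P₁ | P₂]` for `A ∈ GL(2,ℂ)`, where the action
is `(A·P)(v) = P(A⁻¹ v)`; here `a₁', a₂'` are coefficient vectors of
`A·P₁, A·P₂`, characterized by their values as polynomial functions. -/
theorem polyPair_GL_invariance (w : ℕ) (A : GL (Fin 2) ℂ) (a₁ a₂ a₁' a₂' : ℕ → ℂ)
    (h₁ : ∀ x y : ℂ, polyEval w a₁' x y =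
      polyEval w a₁ ((A⁻¹ : GL (Fin 2) ℂ).val.mulVec ![x, y] 0)
        ((A⁻¹ : GL (Fin 2) ℂ).val.mulVec ![x, y] 1))
    (h₂ : ∀ x y : ℂ, polyEval w a₂' x y =
      polyEval w a₂ ((A⁻¹ : GL (Fin 2) ℂ).val.mulVec ![x, y] 0)
        ((A⁻¹ : GL (Fin 2) ℂ).val.mulVec ![x, y] 1)) :
    polyPair w a₁' a₂' = ((A : Matrix (Fin 2) (Fin 2) ℂ).det) ^ (-(w : ℤ)) *
      polyPair w a₁ a₂ := by
  have hgood := (goodMat_all (w := w) (A⁻¹ : GL (Fin 2) ℂ).val).2 a₁ a₂ a₁' a₂' h₁ h₂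
  rw [hgood]
  congr 1
  have hmul : ((A : Matrix (Fin 2) (Fin 2) ℂ).det) * ((A⁻¹ : GL (Fin 2) ℂ).val).det = 1 := by
    rw [← Matrix.det_mul, ← Units.val_mul, mul_inv_cancel]
    simp
  have hdet : ((A⁻¹ : GL (Fin 2) ℂ).val).det = ((A : Matrix (Fin 2) (Fin 2) ℂ).det)⁻¹ :=
    eq_inv_of_mul_eq_one_right hmul
  rw [hdet, _root_.zpow_neg, zpow_natCast, inv_pow]
end

section
/- For nonnegative integers s, t ≤ w and b ∈ ℂ, the pairing of translated monomials satisfies [(X - bY)^s Y^{w-s} | (X - bY)^t Y^{w-t}] = [X^s Y^{w-s} | X^t Y^{w-t}], that is, it equals (-1)^s binom(w,s)^{-1} if s + t = w, and 0 if s + t ≠ w. -/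
open Finset


lemma altSumC (n : ℕ) : ∑ j ∈ range (n + 1), (-1 : ℂ) ^ j * (n.choose j : ℂ)
    = if n = 0 then 1 else 0 := by
  have h := Int.alternating_sum_range_choose (n := n)
  have h2 := congrArg (fun z : ℤ => (z : ℂ)) h
  push_cast at h2
  simpa using h2

lemma sumV (w t k : ℕ) (ht : t ≤ w) :
    ∑ m ∈ range (w + 1), (-1 : ℂ) ^ m * (t.choose m : ℂ) * (m.choose k : ℂ)
      = if t = k then (-1) ^ k else 0 := by
  rcases le_or_gt k t with hk | hk
  · have hsub : Ico k (t + 1) ⊆ range (w + 1) := by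
      intro m hm
      simp only [mem_Ico] at hm
      simp only [mem_range]
      omega
    have hzero : ∀ m ∈ range (w + 1), m ∉ Ico k (t + 1) →
        (-1 : ℂ) ^ m * (t.choose m : ℂ) * (m.choose k : ℂ) = 0 := by
      intro m _ hm
      simp only [mem_Ico, not_and_or, not_le, not_lt] at hm
      rcases hm with hm | hm
      · simp [Nat.choose_eq_zero_of_lt hm]
      · simp [Nat.choose_eq_zero_of_lt (show t < m by omega)]
    rw [← Finset.sum_subset hsub hzero, Finset.sum_Ico_eq_sum_range]
    have hrange : t + 1 - k = (t - k) + 1 := by omega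
    rw [hrange]
    have hterm : ∀ j ∈ range ((t - k) + 1),
        (-1 : ℂ) ^ (k + j) * (t.choose (k + j) : ℂ) * ((k + j).choose k : ℂ)
          = ((-1 : ℂ) ^ k * (t.choose k : ℂ)) * ((-1 : ℂ) ^ j * ((t - k).choose j : ℂ)) := by
      intro j hj
      rw [mem_range] at hj
      have hkj : k + j ≤ t := by omega
      have hnat : t.choose (k + j) * (k + j).choose k = t.choose k * (t - k).choose j := by
        have := Nat.choose_mul (n := t) (k := k + j) (s := k) (Nat.le_add_right k j)
        simpa using this
      have hc := congrArg (fun n : ℕ => (n : ℂ)) hnat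
      push_cast at hc
      rw [pow_add]
      linear_combination ((-1 : ℂ) ^ k * (-1 : ℂ) ^ j) * hc
    rw [Finset.sum_congr rfl hterm, ← Finset.mul_sum, altSumC]
    by_cases h : t = k
    · simp [h, show t - k = 0 by omega]
    · simp [h, show t - k ≠ 0 by omega]
  · have : ∀ m ∈ range (w + 1),
        (-1 : ℂ) ^ m * (t.choose m : ℂ) * (m.choose k : ℂ) = 0 := by
      intro m _
      rcases le_or_gt m t with hm | hm
      · simp [Nat.choose_eq_zero_of_lt (show m < k by omega)]
      · simp [Nat.choose_eq_zero_of_lt hm]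
    rw [Finset.sum_congr rfl this]
    simp [show t ≠ k by omega]

lemma core (w s t : ℕ) (hs : s ≤ w) (ht : t ≤ w) :
    ∑ l ∈ range (w + 1), (-1 : ℂ) ^ l * ((w.choose l : ℂ))⁻¹ * (s.choose l : ℂ)
        * (t.choose (w - l) : ℂ)
      = if s + t = w then (-1) ^ s * ((w.choose s : ℂ))⁻¹ else 0 := by
  have h2 : ((w.choose s : ℂ)) ≠ 0 := by
    exact_mod_cast (Nat.choose_pos hs).ne'
  have key : ∀ l ∈ range (w + 1),
      (-1 : ℂ) ^ l * ((w.choose l : ℂ))⁻¹ * (s.choose l : ℂ) * (t.choose (w - l) : ℂ)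
        = ((-1 : ℂ) ^ w * ((w.choose s : ℂ))⁻¹)
          * ((-1 : ℂ) ^ (w - l) * (t.choose (w - l) : ℂ) * ((w - l).choose (w - s) : ℂ)) := by
    intro l hl
    rw [mem_range] at hl
    have hlw : l ≤ w := by omega
    have h1 : ((w.choose l : ℂ)) ≠ 0 := by
      exact_mod_cast (Nat.choose_pos hlw).ne'
    have hnat : s.choose l * w.choose s = w.choose l * (w - l).choose (w - s) := by
      rcases le_or_gt l s with hls | hls
      · have h3 := Nat.choose_mul (n := w) (k := s) (s := l) hls
        have h4 : (w - l).choose (s - l) = (w - l).choose (w - s) := by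
          rw [← Nat.choose_symm (show s - l ≤ w - l by omega)]
          congr 1
          omega
        rw [← h4, mul_comm]
        exact h3
      · rw [Nat.choose_eq_zero_of_lt hls, Nat.choose_eq_zero_of_lt (show w - l < w - s by omega)]
        ring
    have hc := congrArg (fun n : ℕ => (n : ℂ)) hnat
    push_cast at hc
    have hsign : (-1 : ℂ) ^ w = (-1 : ℂ) ^ (w - l) * (-1 : ℂ) ^ l := by
      rw [← pow_add]
      congr 1
      omega
    have hsq : (-1 : ℂ) ^ (w - l) * (-1 : ℂ) ^ (w - l) = 1 := by
      rw [← pow_add, ← two_mul, pow_mul]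
      simp
    have e1 : (s.choose l : ℂ) = (w.choose l : ℂ) * ((w - l).choose (w - s) : ℂ)
        * ((w.choose s : ℂ))⁻¹ := by
      rw [eq_mul_inv_iff_mul_eq₀ h2]
      exact hc
    have h1' : ((w.choose l : ℂ))⁻¹ * (w.choose l : ℂ) = 1 := inv_mul_cancel₀ h1
    set x := (-1 : ℂ) ^ (w - l) with hx
    rw [hsign, e1]
    linear_combination ((-1 : ℂ) ^ l * ((w - l).choose (w - s) : ℂ) * ((w.choose s : ℂ))⁻¹
        * (t.choose (w - l) : ℂ)) * h1'
      - ((-1 : ℂ) ^ l * ((w.choose s : ℂ))⁻¹ * (t.choose (w - l) : ℂ)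
        * ((w - l).choose (w - s) : ℂ)) * hsq
  rw [Finset.sum_congr rfl key, ← Finset.mul_sum]
  have hrefl := Finset.sum_range_reflect
    (fun m => (-1 : ℂ) ^ m * (t.choose m : ℂ) * (m.choose (w - s) : ℂ)) (w + 1)
  simp only [Nat.add_sub_cancel] at hrefl
  rw [hrefl, sumV w t (w - s) ht]
  by_cases h : s + t = w
  · rw [if_pos (show t = w - s by omega), if_pos h]
    have : (-1 : ℂ) ^ w * (-1 : ℂ) ^ (w - s) = (-1 : ℂ) ^ s := by
      rw [← pow_add, show w + (w - s) = s + 2 * (w - s) by omega, pow_add, pow_mul]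
      simp
    linear_combination ((w.choose s : ℂ))⁻¹ * this
  · rw [if_neg (show ¬ t = w - s by omega), if_neg h, mul_zero]


/-- `[(X - bY)^s Y^{w-s} | (X - bY)^t Y^{w-t}]` equals `(-1)^s (w choose s)⁻¹`
if `s + t = w` and `0` otherwise (which is the value
`[X^s Y^{w-s} | X^t Y^{w-t}]`).  The coefficient vector of `(X - bY)^s Y^{w-s}`
is `l ↦ (s choose l) (-b)^{s-l}`. -/
theorem polyPair_translated_monomials (w s t : ℕ) (hs : s ≤ w) (ht : t ≤ w) (b : ℂ) :
    polyPair w (fun l => (s.choose l : ℂ) * (-b) ^ (s - l))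
        (fun l => (t.choose l : ℂ) * (-b) ^ (t - l))
      = if s + t = w then (-1) ^ s * ((w.choose s : ℂ))⁻¹ else 0 := by
  unfold polyPair
  have key : ∀ l ∈ range (w + 1),
      (-1 : ℂ) ^ l * ((w.choose l : ℂ))⁻¹ * ((s.choose l : ℂ) * (-b) ^ (s - l))
          * ((t.choose (w - l) : ℂ) * (-b) ^ (t - (w - l)))
        = (-b) ^ (s + t - w) * ((-1 : ℂ) ^ l * ((w.choose l : ℂ))⁻¹ * (s.choose l : ℂ)
            * (t.choose (w - l) : ℂ)) := by
    intro l hl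
    rw [mem_range] at hl
    rcases le_or_gt l s with hls | hls
    · rcases le_or_gt (w - l) t with hwt | hwt
      · have hpow : (-b) ^ (s - l) * (-b) ^ (t - (w - l)) = (-b) ^ (s + t - w) := by
          rw [← pow_add]
          congr 1
          omega
        rw [← hpow]
        ring
      · simp [Nat.choose_eq_zero_of_lt hwt]
    · simp [Nat.choose_eq_zero_of_lt hls]
  rw [Finset.sum_congr rfl key, ← Finset.mul_sum, core w s t hs ht]
  by_cases h : s + t = w
  · rw [if_pos h, show s + t - w = 0 by omega, pow_zero, one_mul]
  · rw [if_neg h, mul_zero]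
end
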